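/- arXiv:1804.05506 — 2 statements merged into one kernel-verified Lean document; each statement's English description precedes it below -/
import Mathlib

section
/- Let $s > 0$ and define $K : \mathbb{C} \to \mathbb{R}$ by $K(v) = \sqrt{s^2 + 4|v|^2} - s \log\big(s + \sqrt{s^2 + 4|v|^2}\big)$. Then $K$ is smooth and its Laplacian satisfies $\Delta K(v) > 0$ for all $v$; in particular $K$ is strictly subharmonic on $\mathbb{C}$. -/
noncomputable def auxR (s t : ℝ) : ℝ := Real.sqrt (s ^ 2 + 4 * t)
noncomputable def auxF (s t : ℝ) : ℝ := auxR s t - s * Real.log (s + auxR s t)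
noncomputable def auxg (s t : ℝ) : ℝ := 2 / (s + auxR s t)
noncomputable def auxh (s t : ℝ) : ℝ := -4 / (auxR s t * (s + auxR s t) ^ 2)
def auxq (v : ℂ) : ℝ := v.re * v.re + v.im * v.im
noncomputable def auxDq (v : ℂ) : ℂ →L[ℝ] ℝ :=
  (2 * v.re) • Complex.reCLM + (2 * v.im) • Complex.imCLM

lemma auxq_nonneg (v : ℂ) : 0 ≤ auxq v := by
  have := mul_self_nonneg v.re
  have := mul_self_nonneg v.im
  unfold auxq; linarith

lemma auxDq_apply (v u : ℂ) : auxDq v u = 2 * v.re * u.re + 2 * v.im * u.im := by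
  simp [auxDq]

lemma aux_inner_pos {s t : ℝ} (hs : 0 < s) (ht : 0 ≤ t) : 0 < s ^ 2 + 4 * t := by positivity

lemma auxR_pos {s t : ℝ} (hs : 0 < s) (ht : 0 ≤ t) : 0 < auxR s t :=
  Real.sqrt_pos.mpr (aux_inner_pos hs ht)

lemma auxR_sq {s t : ℝ} (hs : 0 < s) (ht : 0 ≤ t) : auxR s t ^ 2 = s ^ 2 + 4 * t :=
  Real.sq_sqrt (aux_inner_pos hs ht).le

lemma auxsR_pos {s t : ℝ} (hs : 0 < s) (ht : 0 ≤ t) : 0 < s + auxR s t := by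
  have := auxR_pos hs ht; linarith

lemma auxR_hasDeriv {s t : ℝ} (hs : 0 < s) (ht : 0 ≤ t) :
    HasDerivAt (fun t => auxR s t) (2 / auxR s t) t := by
  have h1 : HasDerivAt (fun t : ℝ => s ^ 2 + 4 * t) 4 t := by
    simpa using ((hasDerivAt_id t).const_mul 4).const_add (s ^ 2)
  have h2 := (Real.hasDerivAt_sqrt (aux_inner_pos hs ht).ne').comp t h1
  have hR := auxR_pos hs ht
  refine h2.congr_deriv ?_
  unfold auxR
  field_simp
  ring

lemma auxF_hasDeriv {s t : ℝ} (hs : 0 < s) (ht : 0 ≤ t) :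
    HasDerivAt (fun t => auxF s t) (auxg s t) t := by
  have hR := auxR_pos hs ht
  have hsR := auxsR_pos hs ht
  have h2 := auxR_hasDeriv hs ht
  have h3 : HasDerivAt (fun t => s + auxR s t) (2 / auxR s t) t :=
    (hasDerivAt_const t s).add h2 |>.congr_deriv (by ring)
  have h4 := (Real.hasDerivAt_log hsR.ne').comp t h3
  have h5 := h2.sub (h4.const_mul s)
  refine h5.congr_deriv ?_
  unfold auxg
  field_simp
  ring

lemma auxg_hasDeriv {s t : ℝ} (hs : 0 < s) (ht : 0 ≤ t) :
    HasDerivAt (fun t => auxg s t) (auxh s t) t := by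
  have hR := auxR_pos hs ht
  have hsR := auxsR_pos hs ht
  have h3 : HasDerivAt (fun t => s + auxR s t) (2 / auxR s t) t :=
    (hasDerivAt_const t s).add (auxR_hasDeriv hs ht) |>.congr_deriv (by ring)
  have h5 := (hasDerivAt_const t (2 : ℝ)).div h3 hsR.ne'
  refine h5.congr_deriv ?_
  unfold auxh
  field_simp
  ring

lemma auxq_hasFDeriv (v : ℂ) : HasFDerivAt auxq (auxDq v) v := by
  have hre : HasFDerivAt (fun w : ℂ => w.re) (Complex.reCLM : ℂ →L[ℝ] ℝ) v :=
    Complex.reCLM.hasFDerivAt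
  have him : HasFDerivAt (fun w : ℂ => w.im) (Complex.imCLM : ℂ →L[ℝ] ℝ) v :=
    Complex.imCLM.hasFDerivAt
  have h := (hre.mul hre).add (him.mul him)
  refine h.congr_fderiv ?_
  ext u
  simp [auxDq]
  ring

lemma aux_sum_pos {s t : ℝ} (hs : 0 < s) (ht : 0 ≤ t) :
    0 < 4 * auxg s t + 4 * t * auxh s t := by
  have hR := auxR_pos hs ht
  have hsR := auxsR_pos hs ht
  have hR2 := auxR_sq hs ht
  have key : 4 * auxg s t + 4 * t * auxh s t
      = 8 * (s * auxR s t + s ^ 2 + 2 * t) / (auxR s t * (s + auxR s t) ^ 2) := by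
    unfold auxg auxh
    rw [eq_div_iff (by positivity : (auxR s t * (s + auxR s t) ^ 2) ≠ 0)]
    field_simp
    linear_combination 8 * hR2
  rw [key]
  positivity

theorem stmt_9 (s : ℝ) (hs : 0 < s)
    (K : ℂ → ℝ)
    (hK : K = fun v =>
      Real.sqrt (s ^ 2 + 4 * ‖v‖ ^ 2) -
        s * Real.log (s + Real.sqrt (s ^ 2 + 4 * ‖v‖ ^ 2))) :
    ContDiff ℝ (⊤ : ℕ∞) K ∧
      ∀ v : ℂ,
        0 < fderiv ℝ (fun w => fderiv ℝ K w 1) v 1 +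
            fderiv ℝ (fun w => fderiv ℝ K w Complex.I) v Complex.I := by
  have habs : ∀ v : ℂ, ‖v‖ ^ 2 = auxq v := by
    intro v
    rw [Complex.sq_norm, Complex.normSq_apply, auxq]
  have hKq : K = fun v => auxF s (auxq v) := by
    funext v
    rw [hK]
    simp only [habs, auxF, auxR]
  have hqCD : ContDiff ℝ (⊤ : ℕ∞) auxq := by
    have : ContDiff ℝ (⊤ : ℕ∞) (fun v : ℂ => v.re * v.re + v.im * v.im) :=
      (Complex.reCLM.contDiff.mul Complex.reCLM.contDiff).add
        (Complex.imCLM.contDiff.mul Complex.imCLM.contDiff)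
    exact this
  -- first derivative
  have hKd : ∀ v : ℂ, HasFDerivAt K (auxg s (auxq v) • auxDq v) v := by
    intro v
    rw [hKq]
    exact (auxF_hasDeriv hs (auxq_nonneg v)).comp_hasFDerivAt v (auxq_hasFDeriv v)
  have e1 : (fun w : ℂ => fderiv ℝ K w 1) = fun w => auxg s (auxq w) * (2 * w.re) := by
    funext w
    rw [(hKd w).fderiv]
    simp [auxDq_apply]
  have e2 : (fun w : ℂ => fderiv ℝ K w Complex.I) = fun w => auxg s (auxq w) * (2 * w.im) := by
    funext w
    rw [(hKd w).fderiv]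
    simp [auxDq_apply]
  constructor
  · rw [hKq]
    rw [contDiff_iff_contDiffAt]
    intro v
    have ht := auxq_nonneg v
    have hinner : ContDiff ℝ (⊤ : ℕ∞) (fun t : ℝ => s ^ 2 + 4 * t) :=
      (contDiff_const.add (contDiff_const.mul contDiff_id))
    have hRc : ContDiffAt ℝ (⊤ : ℕ∞) (fun t : ℝ => Real.sqrt (s ^ 2 + 4 * t)) (auxq v) :=
      ContDiffAt.sqrt hinner.contDiffAt (aux_inner_pos hs ht).ne'
    have hlogc : ContDiffAt ℝ (⊤ : ℕ∞)
        (fun t : ℝ => Real.log (s + Real.sqrt (s ^ 2 + 4 * t))) (auxq v) :=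
      ContDiffAt.log (contDiffAt_const.add hRc) (by
        have := auxsR_pos hs ht
        unfold auxR at this
        exact this.ne')
    have hFc : ContDiffAt ℝ (⊤ : ℕ∞) (fun t => auxF s t) (auxq v) := by
      unfold auxF auxR
      exact hRc.sub (contDiffAt_const.mul hlogc)
    exact hFc.comp v hqCD.contDiffAt
  · intro v
    have ht := auxq_nonneg v
    -- second derivative in direction 1
    have hre : HasFDerivAt (fun w : ℂ => 2 * w.re) ((2 : ℝ) • (Complex.reCLM : ℂ →L[ℝ] ℝ)) v := by
      simpa using (Complex.reCLM.hasFDerivAt (x := v)).const_mul (2 : ℝ)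
    have him : HasFDerivAt (fun w : ℂ => 2 * w.im) ((2 : ℝ) • (Complex.imCLM : ℂ →L[ℝ] ℝ)) v := by
      simpa using (Complex.imCLM.hasFDerivAt (x := v)).const_mul (2 : ℝ)
    have hgq : HasFDerivAt (fun w : ℂ => auxg s (auxq w)) (auxh s (auxq v) • auxDq v) v :=
      (auxg_hasDeriv hs ht).comp_hasFDerivAt v (auxq_hasFDeriv v)
    have hd1 : HasFDerivAt (fun w : ℂ => auxg s (auxq w) * (2 * w.re))
        (auxg s (auxq v) • ((2 : ℝ) • (Complex.reCLM : ℂ →L[ℝ] ℝ)) +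
          (2 * v.re) • (auxh s (auxq v) • auxDq v)) v := hgq.mul hre
    have hd2 : HasFDerivAt (fun w : ℂ => auxg s (auxq w) * (2 * w.im))
        (auxg s (auxq v) • ((2 : ℝ) • (Complex.imCLM : ℂ →L[ℝ] ℝ)) +
          (2 * v.im) • (auxh s (auxq v) • auxDq v)) v := hgq.mul him
    rw [e1, e2, hd1.fderiv, hd2.fderiv]
    have hpos := aux_sum_pos hs ht
    simp only [ContinuousLinearMap.add_apply, ContinuousLinearMap.smul_apply,
      auxDq_apply, Complex.one_re, Complex.one_im, Complex.I_re, Complex.I_im,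
      Complex.reCLM_apply, Complex.imCLM_apply, smul_eq_mul]
    have hq : auxq v = v.re * v.re + v.im * v.im := rfl
    rw [hq] at hpos ⊢
    ring_nf at hpos ⊢
    linarith [hpos]
end

section
/- Let $q \in \mathbb{C}^{\times}$, $q \neq -1$, $q^2 \neq -1$ (generic). The variety $X \subset \mathbb{C}^4 \times (\mathbb{C}^{\times})^2$ with coordinates $(u_1,v_1,u_2,v_2,Z_1,Z_2)$ defined by $u_1 v_1 = (1+Z_1)(1 + q Z_1^{-1} Z_2^{-1})$ and $u_2 v_2 = (1+Z_2)(1 + q Z_1^{-1} Z_2^{-1})$ is singular at every point of the locus $\{Z_1 = -1,\ Z_2 = q,\ u_1 = v_1 = 0\}$. -/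
/-! At the point, `u₁ = v₁ = 0` and both factors `1 + Z₁` and `1 + q Z₁⁻¹ Z₂⁻¹` of the right-hand
side of the first equation vanish. Both sides of that equation are thus products of two functions
vanishing at the point, so the first equation has zero differential there and the Jacobian has a
zero row. -/

open Function

section

variable {𝕜 : Type*} [NontriviallyNormedField 𝕜] {E : Type*} [NormedAddCommGroup E]
  [NormedSpace 𝕜 E] {x : E}

theorem hasFDerivAt_mul_zero_of_eq_zero {𝔸 : Type*} [NormedCommRing 𝔸] [NormedAlgebra 𝕜 𝔸]
    {a b : E → 𝔸} (ha : DifferentiableAt 𝕜 a x) (hb : DifferentiableAt 𝕜 b x)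
    (ha₀ : a x = 0) (hb₀ : b x = 0) :
    HasFDerivAt (fun y => a y * b y) (0 : E →L[𝕜] 𝔸) x := by
  convert ha.hasFDerivAt.fun_mul hb.hasFDerivAt using 1
  ext v
  simp [ha₀, hb₀]

theorem not_surjective_fderiv_prodMk_of_hasFDerivAt_zero {F G : Type*} [NormedAddCommGroup F]
    [NormedSpace 𝕜 F] [Nontrivial F] [NormedAddCommGroup G] [NormedSpace 𝕜 G] {g : E → F}
    {h : E → G} (hg : HasFDerivAt g (0 : E →L[𝕜] F) x) (hh : DifferentiableAt 𝕜 h x) :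
    ¬ Surjective (fderiv 𝕜 (fun y => (g y, h y)) x) := by
  rw [(hg.prodMk hh.hasFDerivAt).fderiv]
  intro hs
  obtain ⟨v, hv⟩ := exists_ne (0 : F)
  obtain ⟨w, hw⟩ := hs (v, 0)
  exact hv (by simpa using (congrArg Prod.fst hw).symm)

end

theorem stmt_12_general (q : ℂ) (hq0 : q ≠ 0)
    (u₂ v₂ : ℂ) :
    ¬ Function.Surjective
      (fderiv ℂ (fun P : ℂ × ℂ × ℂ × ℂ × ℂ × ℂ =>
        (P.1 * P.2.1 -
            (1 + P.2.2.2.2.1) * (1 + q * P.2.2.2.2.1⁻¹ * P.2.2.2.2.2⁻¹),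
         P.2.2.1 * P.2.2.2.1 -
            (1 + P.2.2.2.2.2) * (1 + q * P.2.2.2.2.1⁻¹ * P.2.2.2.2.2⁻¹)))
        ((0 : ℂ), (0 : ℂ), u₂, v₂, (-1 : ℂ), q)) := by
  apply not_surjective_fderiv_prodMk_of_hasFDerivAt_zero
  · have hlhs := hasFDerivAt_mul_zero_of_eq_zero (𝕜 := ℂ)
      (a := fun P : ℂ × ℂ × ℂ × ℂ × ℂ × ℂ => P.1) (b := fun P => P.2.1)
      (x := ((0 : ℂ), (0 : ℂ), u₂, v₂, (-1 : ℂ), q)) (by fun_prop) (by fun_prop) rfl rfl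
    have hrhs := hasFDerivAt_mul_zero_of_eq_zero (𝕜 := ℂ)
      (a := fun P : ℂ × ℂ × ℂ × ℂ × ℂ × ℂ => 1 + P.2.2.2.2.1)
      (b := fun P => 1 + q * P.2.2.2.2.1⁻¹ * P.2.2.2.2.2⁻¹)
      (x := ((0 : ℂ), (0 : ℂ), u₂, v₂, (-1 : ℂ), q)) (by fun_prop)
      (by fun_prop (disch := first | norm_num | exact hq0)) (by norm_num) (by field_simp; ring)
    simpa only [sub_zero] using hlhs.fun_sub hrhs
  · fun_prop (disch := first | norm_num | exact hq0)

theorem stmt_12 (q : ℂ) (hq0 : q ≠ 0) (hq1 : q ≠ -1) (hq2 : q ^ 2 ≠ -1)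
    (u₂ v₂ : ℂ)
    (h : u₂ * v₂ = (1 + q) * (1 + q * (-1 : ℂ)⁻¹ * q⁻¹)) :
    ¬ Function.Surjective
      (fderiv ℂ (fun P : ℂ × ℂ × ℂ × ℂ × ℂ × ℂ =>
        (P.1 * P.2.1 -
            (1 + P.2.2.2.2.1) * (1 + q * P.2.2.2.2.1⁻¹ * P.2.2.2.2.2⁻¹),
         P.2.2.1 * P.2.2.2.1 -
            (1 + P.2.2.2.2.2) * (1 + q * P.2.2.2.2.1⁻¹ * P.2.2.2.2.2⁻¹)))
        ((0 : ℂ), (0 : ℂ), u₂, v₂, (-1 : ℂ), q)) :=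
  stmt_12_general q hq0 u₂ v₂
end
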